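/- arXiv:2110.02756 — 3 statements merged into one kernel-verified Lean document; each statement's English description precedes it below -/
import Mathlib

section
/- If φ: ℝ^m → ℝ has continuous second partial derivatives and all mixed second partial derivatives ∂²φ/∂x_i∂x_j for i ≠ j are nonnegative, then φ is superadditive, i.e., φ(x ⊔ y) + φ(x ⊓ y) ≥ φ(x) + φ(y) for all x, y ∈ ℝ^m, where ⊔ and ⊓ denote componentwise maximum and minimum. -/
open Filter

/-- A function `φ : ℝ^m → ℝ` is superadditive if
`φ(x ⊔ y) + φ(x ⊓ y) ≥ φ(x) + φ(y)` for all `x, y`, componentwise max/min. -/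
def Superadditive {m : ℕ} (φ : (Fin m → ℝ) → ℝ) : Prop :=
  ∀ x y : Fin m → ℝ, φ x + φ y ≤ φ (x ⊔ y) + φ (x ⊓ y)

/-!
Write `x = u + d` and `y = u + c` with `u = x ⊓ y`; then `c, d ≥ 0` have disjoint supports, so
`D²φ(z)(d, c)` is a nonnegative combination of mixed partials alone. Hence
`t ↦ φ(u + t • c + d) - φ(u + t • c)` is monotone, and comparing `t = 0` with `t = 1` gives
`φ x - φ (x ⊓ y) ≤ φ (x ⊔ y) - φ y`.
-/

section Calculus

variable {E : Type*} [NormedAddCommGroup E] [NormedSpace ℝ E] {f : E → ℝ}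

theorem fderiv_fderiv_apply_const {x : E} (hf' : DifferentiableAt ℝ (fderiv ℝ f) x) (v w : E) :
    fderiv ℝ (fun y => fderiv ℝ f y v) x w = fderiv ℝ (fderiv ℝ f) x w v := by
  rw [fderiv_clm_apply hf' (differentiableAt_const v)]
  simp

theorem hasDerivAt_comp_add_smul {g : E → ℝ} (hg : Differentiable ℝ g) (p d : E) (s : ℝ) :
    HasDerivAt (fun s : ℝ => g (p + s • d)) (fderiv ℝ g (p + s • d) d) s := by
  have hline : HasDerivAt (fun s : ℝ => p + s • d) d s := by
    simpa using ((hasDerivAt_id s).smul_const d).const_add p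
  exact (hg _).hasFDerivAt.comp_hasDerivAt s hline

theorem fderiv_apply_le_fderiv_add_apply (hf' : Differentiable ℝ (fderiv ℝ f)) {c d : E}
    (h : ∀ x, 0 ≤ fderiv ℝ (fderiv ℝ f) x d c) (p : E) :
    fderiv ℝ f p c ≤ fderiv ℝ f (p + d) c := by
  have hdiff : Differentiable ℝ fun y => fderiv ℝ f y c := hf'.clm_apply (differentiable_const c)
  have hmono : Monotone fun s : ℝ => fderiv ℝ f (p + s • d) c := by
    refine monotone_of_deriv_nonneg
      (fun s => (hasDerivAt_comp_add_smul hdiff p d s).differentiableAt) fun s => ?_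
    rw [(hasDerivAt_comp_add_smul hdiff p d s).deriv, fderiv_fderiv_apply_const (hf' _)]
    exact h _
  simpa using hmono zero_le_one

theorem sub_le_sub_of_fderiv_fderiv_nonneg (hf : Differentiable ℝ f)
    (hf' : Differentiable ℝ (fderiv ℝ f)) {c d : E}
    (h : ∀ x, 0 ≤ fderiv ℝ (fderiv ℝ f) x d c) (u : E) :
    f (u + d) - f u ≤ f (u + c + d) - f (u + c) := by
  have hder (t : ℝ) : HasDerivAt (fun t : ℝ => f (u + d + t • c) - f (u + t • c))
      (fderiv ℝ f (u + d + t • c) c - fderiv ℝ f (u + t • c) c) t :=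
    (hasDerivAt_comp_add_smul hf (u + d) c t).sub (hasDerivAt_comp_add_smul hf u c t)
  have hmono : Monotone fun t : ℝ => f (u + d + t • c) - f (u + t • c) := by
    refine monotone_of_deriv_nonneg (fun t => (hder t).differentiableAt) fun t => ?_
    rw [(hder t).deriv, sub_nonneg, add_right_comm]
    exact fderiv_apply_le_fderiv_add_apply hf' h _
  simpa [add_right_comm u c d] using hmono zero_le_one

end Calculus

theorem ContinuousLinearMap.apply_apply_nonneg_of_offDiag_nonneg {ι : Type*} [Fintype ι]
    [DecidableEq ι] (B : (ι → ℝ) →L[ℝ] (ι → ℝ) →L[ℝ] ℝ)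
    (hB : ∀ i j, i ≠ j → 0 ≤ B (Pi.single i 1) (Pi.single j 1)) {v w : ι → ℝ}
    (hv : 0 ≤ v) (hw : 0 ≤ w) (hvw : ∀ i, v i * w i = 0) : 0 ≤ B v w := by
  rw [← Finset.univ_sum_single v, ← Finset.univ_sum_single w]
  simp only [map_sum, sum_apply]
  refine Finset.sum_nonneg fun i _ => Finset.sum_nonneg fun j _ => ?_
  have hsingle (k : ι) (a : ℝ) : Pi.single k a = a • (Pi.single k 1 : ι → ℝ) := by
    rw [← Pi.single_smul', smul_eq_mul, mul_one]
  rw [hsingle i, hsingle j, map_smul, map_smul, smul_apply, smul_eq_mul, smul_eq_mul]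
  rcases eq_or_ne j i with rfl | hji
  · rw [mul_left_comm, ← mul_assoc, hvw, zero_mul]
  · exact mul_nonneg (hw i) (mul_nonneg (hv j) (hB j i hji))

/-- If `φ : ℝ^m → ℝ` has continuous second partial derivatives and all mixed
second partials `∂²φ/∂x_i∂x_j`, `i ≠ j`, are nonnegative, then `φ` is superadditive. -/
theorem superadditive_of_nonneg_mixed_partials {m : ℕ} (φ : (Fin m → ℝ) → ℝ)
    (hsmooth : ContDiff ℝ 2 φ)
    (hmixed : ∀ x : Fin m → ℝ, ∀ i j : Fin m, i ≠ j →
      0 ≤ fderiv ℝ (fun y => fderiv ℝ φ y (Pi.single i (1 : ℝ))) x (Pi.single j (1 : ℝ))) :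
    Superadditive φ := by
  intro x y
  have hφ' : Differentiable ℝ (fderiv ℝ φ) :=
    (hsmooth.fderiv_right (m := 1) le_rfl).differentiable one_ne_zero
  have hdisj : ∀ i, (y - x ⊓ y) i * (x - x ⊓ y) i = 0 := by
    intro i
    rcases le_total (x i) (y i) with h | h <;> simp [h]
  have hcross (z : Fin m → ℝ) : 0 ≤ fderiv ℝ (fderiv ℝ φ) z (x - x ⊓ y) (y - x ⊓ y) := by
    refine (fderiv ℝ (fderiv ℝ φ) z).flip.apply_apply_nonneg_of_offDiag_nonneg
      (fun i j hij => ?_) (sub_nonneg.2 inf_le_right) (sub_nonneg.2 inf_le_left) hdisj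
    rw [ContinuousLinearMap.flip_apply, ← fderiv_fderiv_apply_const (hφ' z)]
    exact hmixed z i j hij
  have key := sub_le_sub_of_fderiv_fderiv_nonneg (hsmooth.differentiable two_ne_zero) hφ'
    hcross (x ⊓ y)
  have hsup : y + (x - x ⊓ y) = x ⊔ y := by
    rw [add_sub, sub_eq_iff_eq_add', add_comm y, inf_add_sup]
  rw [add_sub_cancel, add_sub_cancel, hsup] at key
  linarith
end

section
/- Strong consistency of the least square estimator: in the model Y_{τ_i} = a τ_i + (W_{τ_i} − W_{τ_{i−1}}), i = 1,…,N(1), with τ_i = ∑_{j=1}^i t_j, τ_0 = 0, N(1) = ∑_{j≥1} 1_{τ_j ≤ 1}, suppose W is almost surely continuous on [0,∞) and the random times satisfy: (i) (1/N(1)) ∑_{j=1}^{N(1)} τ_j² → 1/3 a.s., (ii) N(1)/N → 1 a.s., (iii) τ_{N(1)} → 1 a.s., (iv) max_{1 ≤ j ≤ 2N} t_j → 0 a.s. Then N(1)(â_{N(1)} − a) → 3 ∫_0^1 (W_1 − W_s) ds almost surely as N → ∞, where â_{N(1)} = (∑_{i=1}^{N(1)} Y_{τ_i} τ_i)/(∑_{i=1}^{N(1)}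 τ_i²). -/
open MeasureTheory Filter

lemma tel (g : ℕ → ℝ) (n : ℕ) : ∑ i ∈ Finset.Icc 1 n, (g i - g (i-1)) = g n - g 0 := by
  induction n with
  | zero => simp
  | succ n ih => rw [Finset.sum_Icc_succ_top (by omega : 1 ≤ n+1), ih]; simp

lemma sumadj (f : ℝ → ℝ) (σ : ℕ → ℝ) (n : ℕ)
    (hint : ∀ i, IntervalIntegrable f MeasureTheory.volume (σ i) (σ (i+1))) :
    ∑ i ∈ Finset.Icc 1 n, ∫ x in (σ (i-1))..(σ i), f x = ∫ x in (σ 0)..(σ n), f x := by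
  induction n with
  | zero => simp
  | succ n ih =>
      rw [Finset.sum_Icc_succ_top (by omega : 1 ≤ n+1), ih]
      simp only [Nat.add_sub_cancel]
      rw [intervalIntegral.integral_add_adjacent_intervals]
      · exact IntervalIntegrable.trans_iterate (fun i _ => hint i)
      · exact hint n

lemma riemann_main (f : ℝ → ℝ) (hf : ContinuousOn f (Set.Ici 0))
    (σ : ℕ → ℕ → ℝ) (n : ℕ → ℕ)
    (hσ0 : ∀ N, σ N 0 = 0)
    (hmono : ∀ N, Monotone (σ N))
    (hmesh : ∀ ε > 0, ∀ᶠ N in atTop, ∀ i ∈ Finset.Icc 1 (n N), σ N i - σ N (i-1) < ε)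
    (hσn : Tendsto (fun N => σ N (n N)) atTop (nhds 1)) :
    Tendsto (fun N => ∑ i ∈ Finset.Icc 1 (n N), σ N i * (f (σ N i) - f (σ N (i-1)))) atTop
      (nhds (f 1 - ∫ s in (0:ℝ)..1, f s)) := by
  have hnn : ∀ N i, 0 ≤ σ N i := fun N i => by
    have := hmono N (Nat.zero_le i); rwa [hσ0 N] at this
  have hint : ∀ x y : ℝ, 0 ≤ x → 0 ≤ y → IntervalIntegrable f MeasureTheory.volume x y := by
    intro x y hx hy
    apply (hf.mono ?_).intervalIntegrable
    exact (Set.uIcc_subset_Icc ⟨hx, le_max_left x y⟩ ⟨hy, le_max_right x y⟩).trans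
      Set.Icc_subset_Ici_self
  set E : ℕ → ℝ := fun N => ∑ i ∈ Finset.Icc 1 (n N),
    ((σ N i - σ N (i-1)) * f (σ N (i-1)) - ∫ x in (σ N (i-1))..(σ N i), f x) with hEdef
  have hE : ∀ N, ∑ i ∈ Finset.Icc 1 (n N), σ N i * (f (σ N i) - f (σ N (i-1)))
      = σ N (n N) * f (σ N (n N)) - (∫ x in (1:ℝ)..σ N (n N), f x)
        - (∫ s in (0:ℝ)..1, f s) - E N := by
    intro N
    have A1 : ∑ i ∈ Finset.Icc 1 (n N), σ N i * (f (σ N i) - f (σ N (i-1)))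
        = σ N (n N) * f (σ N (n N))
          - ∑ i ∈ Finset.Icc 1 (n N), (σ N i - σ N (i-1)) * f (σ N (i-1)) := by
      have t1 := tel (fun i => σ N i * f (σ N i)) (n N)
      rw [hσ0 N, zero_mul, sub_zero] at t1
      calc ∑ i ∈ Finset.Icc 1 (n N), σ N i * (f (σ N i) - f (σ N (i-1)))
          = ∑ i ∈ Finset.Icc 1 (n N), ((σ N i * f (σ N i) - σ N (i-1) * f (σ N (i-1)))
              - (σ N i - σ N (i-1)) * f (σ N (i-1))) :=
            Finset.sum_congr rfl (fun i _ => by ring)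
        _ = _ := by rw [Finset.sum_sub_distrib, t1]
    have A2 : ∑ i ∈ Finset.Icc 1 (n N), (σ N i - σ N (i-1)) * f (σ N (i-1))
        = E N + ((∫ s in (0:ℝ)..1, f s) + ∫ x in (1:ℝ)..σ N (n N), f x) := by
      show _ = (∑ i ∈ Finset.Icc 1 (n N),
        ((σ N i - σ N (i-1)) * f (σ N (i-1)) - ∫ x in (σ N (i-1))..(σ N i), f x)) + _
      rw [Finset.sum_sub_distrib, sumadj f (σ N) (n N) (fun i => hint _ _ (hnn N i) (hnn N (i+1))),
        hσ0 N, intervalIntegral.integral_add_adjacent_intervals (hint 0 1 le_rfl zero_le_one)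
          (hint 1 _ zero_le_one (hnn N (n N)))]
      ring
    rw [A1, A2]; ring
  have L1 : Tendsto (fun N => σ N (n N) * f (σ N (n N))) atTop (nhds (1 * f 1)) := by
    apply hσn.mul
    have hcw : ContinuousWithinAt f (Set.Ici 0) 1 := hf 1 (by norm_num)
    apply hcw.tendsto.comp
    rw [tendsto_nhdsWithin_iff]
    exact ⟨hσn, Eventually.of_forall fun N => hnn N (n N)⟩
  obtain ⟨C, hC⟩ := (isCompact_Icc (a := (0:ℝ)) (b := 2)).exists_bound_of_continuousOn
    (hf.mono (Set.Icc_subset_Ici_self))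
  have L2 : Tendsto (fun N => ∫ x in (1:ℝ)..σ N (n N), f x) atTop (nhds 0) := by
    apply squeeze_zero_norm' (a := fun N => C * |σ N (n N) - 1|)
    · filter_upwards [hσn.eventually (eventually_le_nhds (by norm_num : (1:ℝ) < 2))] with N h2
      apply intervalIntegral.norm_integral_le_of_norm_le_const
      intro x hx
      apply hC
      have : Set.uIoc 1 (σ N (n N)) ⊆ Set.Icc 0 2 := by
        refine (Set.Ioc_subset_Icc_self).trans ?_
        exact Set.uIcc_subset_Icc ⟨zero_le_one, by norm_num⟩ ⟨hnn N (n N), h2⟩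
      exact this hx
    · have := ((hσn.sub_const 1).abs).const_mul C
      simpa using this
  have L3 : Tendsto E atTop (nhds 0) := by
    rw [NormedAddCommGroup.tendsto_nhds_zero]
    intro ε hε
    have huc := (isCompact_Icc (a := (0:ℝ)) (b := 2)).uniformContinuousOn_of_continuous
      (hf.mono (Set.Icc_subset_Ici_self))
    rw [Metric.uniformContinuousOn_iff] at huc
    obtain ⟨δ, hδ, hδ'⟩ := huc (ε/4) (by positivity)
    filter_upwards [hmesh δ hδ,
      hσn.eventually (eventually_le_nhds (by norm_num : (1:ℝ) < 2))] with N hm h2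
    have hbound : ∀ i ∈ Finset.Icc 1 (n N),
        ‖(σ N i - σ N (i-1)) * f (σ N (i-1)) - ∫ x in (σ N (i-1))..(σ N i), f x‖
        ≤ (ε/4) * (σ N i - σ N (i-1)) := by
      intro i hi
      have h1i : σ N (i-1) ≤ σ N i := hmono N (by omega)
      have hup : σ N i ≤ σ N (n N) := hmono N (Finset.mem_Icc.mp hi).2
      have heq : (σ N i - σ N (i-1)) * f (σ N (i-1)) - ∫ x in (σ N (i-1))..(σ N i), f x
          = ∫ x in (σ N (i-1))..(σ N i), (f (σ N (i-1)) - f x) := by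
        rw [intervalIntegral.integral_sub intervalIntegrable_const
          (hint _ _ (hnn N (i-1)) (hnn N i)), intervalIntegral.integral_const, smul_eq_mul]
      rw [heq]
      have := intervalIntegral.norm_integral_le_of_norm_le_const (C := ε/4)
        (f := fun x => f (σ N (i-1)) - f x) (a := σ N (i-1)) (b := σ N i) ?_
      · calc ‖∫ x in (σ N (i-1))..(σ N i), (f (σ N (i-1)) - f x)‖
            ≤ ε/4 * |σ N i - σ N (i-1)| := this
          _ = ε/4 * (σ N i - σ N (i-1)) := by rw [abs_of_nonneg (by linarith)]
      · intro x hx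
        rw [Set.uIoc_of_le h1i] at hx
        have hx1 : σ N (i-1) ≤ x := le_of_lt hx.1
        have hx2 : x ≤ σ N i := hx.2
        have hm' : σ N i - σ N (i-1) < δ := hm i hi
        have hxI : x ∈ Set.Icc (0:ℝ) 2 := ⟨le_trans (hnn N (i-1)) hx1, by linarith⟩
        have hsI : σ N (i-1) ∈ Set.Icc (0:ℝ) 2 := ⟨hnn N (i-1), by linarith⟩
        have hd : dist (σ N (i-1)) x < δ := by
          rw [Real.dist_eq, abs_of_nonpos (by linarith)]; linarith
        have := hδ' _ hsI _ hxI hd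
        rw [Real.dist_eq] at this
        exact le_of_lt this
    calc ‖E N‖ ≤ ∑ i ∈ Finset.Icc 1 (n N),
          ‖(σ N i - σ N (i-1)) * f (σ N (i-1)) - ∫ x in (σ N (i-1))..(σ N i), f x‖ := by
          rw [hEdef]; exact norm_sum_le _ _
      _ ≤ ∑ i ∈ Finset.Icc 1 (n N), (ε/4) * (σ N i - σ N (i-1)) :=
          Finset.sum_le_sum hbound
      _ = (ε/4) * (σ N (n N) - σ N 0) := by rw [← Finset.mul_sum, tel (σ N) (n N)]
      _ = (ε/4) * σ N (n N) := by rw [hσ0 N, sub_zero]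
      _ ≤ (ε/4) * 2 := by
          apply mul_le_mul_of_nonneg_left h2 (by positivity)
      _ < ε := by linarith
  have hfinal : Tendsto (fun N => ((σ N (n N) * f (σ N (n N)) - ∫ x in (1:ℝ)..σ N (n N), f x)
      - ∫ s in (0:ℝ)..1, f s) - E N) atTop (nhds (((1 * f 1 - 0) - ∫ s in (0:ℝ)..1, f s) - 0)) :=
    ((L1.sub L2).sub tendsto_const_nhds).sub L3
  have h := hfinal.congr (fun N => (hE N).symm)
  simpa using h


/-- Strong consistency of the least square estimator: in the model
`Y_{τ_i} = a τ_i + (W_{τ_i} − W_{τ_{i−1}})`, `i = 1,…,N(1)`, with `τ_i = ∑_{j=1}^i t_j`,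
`τ_0 = 0`, `N(1) = #{j ≥ 1 : τ_j ≤ 1}`, if `W` is a.s. continuous on `[0,∞)` and
(i) `(1/N(1)) ∑_{j=1}^{N(1)} τ_j² → 1/3` a.s., (ii) `N(1)/N → 1` a.s.,
(iii) `τ_{N(1)} → 1` a.s., (iv) `max_{1 ≤ j ≤ 2N} t_j → 0` a.s., then
`N(1)(â_{N(1)} − a) → 3 ∫_0^1 (W_1 − W_s) ds` almost surely, where
`â_{N(1)} = (∑_{i=1}^{N(1)} Y_{τ_i} τ_i)/(∑_{i=1}^{N(1)} τ_i²)`. -/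
theorem lse_strong_consistency {Ω : Type} [MeasurableSpace Ω] (μ : Measure Ω)
    [IsProbabilityMeasure μ] (t : ℕ → ℕ → Ω → ℝ) (hnn : ∀ N j ω, 0 ≤ t N j ω)
    (τ : ℕ → ℕ → Ω → ℝ) (hτ : ∀ N i ω, τ N i ω = ∑ j ∈ Finset.Icc 1 i, t N j ω)
    (N1 : ℕ → Ω → ℕ)
    (hN1 : ∀ N ω, N1 N ω = Set.ncard {j : ℕ | 1 ≤ j ∧ τ N j ω ≤ 1})
    (W : Ω → ℝ → ℝ) (a : ℝ)
    (Y : ℕ → ℕ → Ω → ℝ)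
    (hY : ∀ N i ω, Y N i ω = a * τ N i ω + (W ω (τ N i ω) - W ω (τ N (i - 1) ω)))
    (hW : ∀ᵐ ω ∂μ, ContinuousOn (W ω) (Set.Ici 0))
    (h1 : ∀ᵐ ω ∂μ, Tendsto (fun N : ℕ =>
        (1 / (N1 N ω : ℝ)) * ∑ j ∈ Finset.Icc 1 (N1 N ω), τ N j ω ^ 2)
      atTop (nhds (1 / 3)))
    (h2 : ∀ᵐ ω ∂μ, Tendsto (fun N : ℕ => (N1 N ω : ℝ) / N) atTop (nhds 1))
    (h3 : ∀ᵐ ω ∂μ, Tendsto (fun N : ℕ => τ N (N1 N ω) ω) atTop (nhds 1))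
    (h4 : ∀ᵐ ω ∂μ, Tendsto (fun N : ℕ => ⨆ j ∈ Finset.Icc 1 (2 * N), t N j ω)
      atTop (nhds 0)) :
    ∀ᵐ ω ∂μ, Tendsto (fun N : ℕ => (N1 N ω : ℝ) *
        ((∑ i ∈ Finset.Icc 1 (N1 N ω), Y N i ω * τ N i ω) /
          (∑ i ∈ Finset.Icc 1 (N1 N ω), τ N i ω ^ 2) - a))
      atTop (nhds (3 * ∫ s in (0 : ℝ)..1, (W ω 1 - W ω s))) := by
  filter_upwards [hW, h1, h2, h3, h4] with ω hWo h1o h2o h3o h4o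
  set f : ℝ → ℝ := W ω with hfdef
  have hσ0 : ∀ N, τ N 0 ω = 0 := by intro N; rw [hτ]; simp
  have hmonoσ : ∀ N, Monotone (fun i => τ N i ω) := by
    intro N
    apply monotone_nat_of_le_succ
    intro i
    simp only [hτ]
    exact Finset.sum_le_sum_of_subset_of_nonneg
      (Finset.Icc_subset_Icc_right (by omega)) (fun j _ _ => hnn N j ω)
  have hdiff : ∀ N i, 1 ≤ i → τ N i ω - τ N (i-1) ω = t N i ω := by
    intro N i hi
    rw [hτ, hτ]
    have h := Finset.sum_Icc_succ_top (by omega : 1 ≤ (i-1)+1) (fun j => t N j ω)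
    have hi1 : i - 1 + 1 = i := by omega
    rw [hi1] at h
    rw [h]; ring
  have hmesh : ∀ ε > 0, ∀ᶠ N in atTop,
      ∀ i ∈ Finset.Icc 1 (N1 N ω), τ N i ω - τ N (i-1) ω < ε := by
    intro ε hε
    filter_upwards [h4o.eventually (eventually_lt_nhds hε),
      h2o.eventually (eventually_lt_nhds (by norm_num : (1:ℝ) < 3/2)),
      eventually_gt_atTop 0] with N hs hn hN
    intro i hi
    obtain ⟨hi1, hi2⟩ := Finset.mem_Icc.mp hi
    have hNpos : (0:ℝ) < N := by exact_mod_cast hN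
    rw [div_lt_iff₀ hNpos] at hn
    have hle : N1 N ω ≤ 2 * N := by
      have : (N1 N ω : ℝ) < 2 * N := by linarith
      exact_mod_cast le_of_lt this
    rw [hdiff N i hi1]
    have hmem : i ∈ Finset.Icc 1 (2*N) := Finset.mem_Icc.mpr ⟨hi1, le_trans hi2 hle⟩
    have hbdd : BddAbove (Set.range (fun j => ⨆ _ : j ∈ Finset.Icc 1 (2*N), t N j ω)) := by
      refine ⟨∑ j ∈ Finset.Icc 1 (2*N), t N j ω, ?_⟩
      rintro x ⟨j, rfl⟩
      dsimp only
      by_cases hj : j ∈ Finset.Icc 1 (2*N)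
      · rw [ciSup_pos hj]
        exact Finset.single_le_sum (f := fun k => t N k ω) (fun k _ => hnn N k ω) hj
      · simp only [hj]
        rw [Real.iSup_of_isEmpty]
        exact Finset.sum_nonneg (fun k _ => hnn N k ω)
    have h' := le_ciSup hbdd i
    rw [show (⨆ _ : i ∈ Finset.Icc 1 (2*N), t N i ω)
      = t N i ω from ciSup_pos hmem] at h'
    exact lt_of_le_of_lt h' hs
  have hB := riemann_main f hWo (fun N i => τ N i ω) (fun N => N1 N ω)
    hσ0 hmonoσ hmesh h3o
  have hquot := hB.div h1o (by norm_num : (1:ℝ)/3 ≠ 0)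
  have hfint01 : IntervalIntegrable f MeasureTheory.volume 0 1 := by
    apply (hWo.mono ?_).intervalIntegrable
    rw [Set.uIcc_of_le zero_le_one]
    exact Set.Icc_subset_Ici_self
  have hval : ∫ s in (0:ℝ)..1, (f 1 - f s) = f 1 - ∫ s in (0:ℝ)..1, f s := by
    rw [intervalIntegral.integral_sub intervalIntegrable_const hfint01,
      intervalIntegral.integral_const]
    simp
  rw [show (3 : ℝ) * ∫ s in (0:ℝ)..1, (f 1 - f s)
      = (f 1 - ∫ s in (0:ℝ)..1, f s) / (1/3) from by rw [hval]; ring]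
  apply hquot.congr'
  filter_upwards [h1o.eventually (eventually_gt_nhds (by norm_num : (1:ℝ)/4 < 1/3))] with N hS
  have hn0 : (N1 N ω : ℝ) ≠ 0 := by
    intro h
    norm_num [h] at hS
  have hS0 : (∑ i ∈ Finset.Icc 1 (N1 N ω), τ N i ω ^ 2) ≠ 0 := by
    intro h
    norm_num [h] at hS
  have hsum : ∑ i ∈ Finset.Icc 1 (N1 N ω), Y N i ω * τ N i ω
      = a * (∑ i ∈ Finset.Icc 1 (N1 N ω), τ N i ω ^ 2)
        + ∑ i ∈ Finset.Icc 1 (N1 N ω), τ N i ω * (f (τ N i ω) - f (τ N (i-1) ω)) := by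
    have hc : ∀ i ∈ Finset.Icc 1 (N1 N ω), Y N i ω * τ N i ω
        = a * τ N i ω ^ 2 + τ N i ω * (f (τ N i ω) - f (τ N (i-1) ω)) := by
      intro i _
      rw [hY, ← hfdef]
      ring
    rw [Finset.sum_congr rfl hc, Finset.sum_add_distrib, ← Finset.mul_sum]
  show (∑ i ∈ Finset.Icc 1 (N1 N ω), τ N i ω * (f (τ N i ω) - f (τ N (i-1) ω))) /
      ((1/(N1 N ω : ℝ)) * ∑ j ∈ Finset.Icc 1 (N1 N ω), τ N j ω ^ 2)
    = (N1 N ω : ℝ) * ((∑ i ∈ Finset.Icc 1 (N1 N ω), Y N i ω * τ N i ω) /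
        (∑ i ∈ Finset.Icc 1 (N1 N ω), τ N i ω ^ 2) - a)
  rw [hsum]
  field_simp
  ring
end

section
/- Numerator convergence: under the assumptions that W is almost surely continuous, τ_{N(1)} → 1 a.s., N(1)/N → 1 a.s., and max_{1 ≤ j ≤ 2N} t_j → 0 a.s., we have ∑_{j=1}^{N(1)} τ_j (W_{τ_j} − W_{τ_{j−1}}) → ∫_0^1 (W_1 − W_t) dt almost surely as N → ∞. -/
/-! Summation by parts turns the sum into the boundary term `τ_{N(1)} W(τ_{N(1)})`, which tends to
`W 1`, minus a left Riemann sum of `W` over the partition `0 = τ_0 ≤ … ≤ τ_{N(1)} ≤ 1`. Since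
`N(1) ≤ 2N` eventually, the mesh of that partition is at most `max_{j ≤ 2N} t_j → 0`, and its
right end tends to `1`, so uniform continuity of `W` on `[0, 1]` makes the Riemann sums converge
to `∫_0^1 W`. -/

open MeasureTheory Filter Set Topology

theorem sum_Icc_by_parts {R : Type*} [CommRing R] (a b : ℕ → R) (n : ℕ) :
    ∑ j ∈ Finset.Icc 1 n, a j * (b j - b (j - 1)) =
      a n * b n - a 0 * b 0 - ∑ j ∈ Finset.Icc 1 n, b (j - 1) * (a j - a (j - 1)) := by
  induction n with
  | zero => simp
  | succ k ih =>
    rw [Finset.sum_Icc_succ_top k.succ_pos, Finset.sum_Icc_succ_top k.succ_pos, ih,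
      Nat.add_sub_cancel]
    ring

theorem monotone_sum_Icc_one {M : Type*} [AddCommMonoid M] [PartialOrder M]
    [IsOrderedAddMonoid M] {t : ℕ → M} (ht : ∀ j, 0 ≤ t j) :
    Monotone fun i => ∑ j ∈ Finset.Icc 1 i, t j := fun _ _ hij =>
  Finset.sum_le_sum_of_subset_of_nonneg (Finset.Icc_subset_Icc_right hij) fun j _ _ => ht j

theorem sum_Icc_one_sub_sum_Icc_one_pred {R : Type*} [AddCommGroup R] (t : ℕ → R) {i : ℕ}
    (hi : 1 ≤ i) : ∑ j ∈ Finset.Icc 1 i, t j - ∑ j ∈ Finset.Icc 1 (i - 1), t j = t i := by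
  obtain ⟨k, rfl⟩ := Nat.exists_eq_add_of_le' hi
  rw [Finset.sum_Icc_succ_top k.succ_pos, Nat.add_sub_cancel, add_sub_cancel_left]

theorem Finset.le_biSup_of_mem {ι α : Type*} [ConditionallyCompleteLattice α] (s : Finset ι)
    (f : ι → α) {i : ι} (hi : i ∈ s) : f i ≤ ⨆ j ∈ s, f j := by
  refine le_ciSup₂ (f := fun j (_ : j ∈ s) => f j) ?_ i hi
  exact (s.finite_toSet.image f).bddAbove.mono
    (iUnion_subset fun j => range_subset_iff.2 fun hj => Set.mem_image_of_mem f hj)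

theorem Monotone.apply_ncard_setOf_le {α : Type*} [LinearOrder α] {σ : ℕ → α}
    (hσ : Monotone σ) {c : α} (h0 : σ 0 ≤ c) : σ {j | 1 ≤ j ∧ σ j ≤ c}.ncard ≤ c := by
  set m := {j | 1 ≤ j ∧ σ j ≤ c}.ncard with hm
  by_contra! hcm
  have hm0 : m ≠ 0 := fun h => by rw [h] at hcm; exact hcm.not_ge h0
  -- every index `j` with `σ j ≤ c < σ m` lies below `m`, so there are fewer than `m` of them
  have hsub : {j | 1 ≤ j ∧ σ j ≤ c} ⊆ (Finset.Icc 1 (m - 1) : Set ℕ) := by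
    rintro j ⟨hj1, hjc⟩
    have hjm : j < m := lt_of_not_ge fun hmj => (hjc.trans_lt hcm).not_ge (hσ hmj)
    simp only [Finset.coe_Icc, mem_Icc]
    omega
  have hcard := ncard_le_ncard hsub (Finset.finite_toSet _)
  rw [ncard_coe_finset, Nat.card_Icc, ← hm] at hcard
  omega

theorem eventually_le_mul_of_tendsto_div {a : ℕ → ℝ} {l r : ℝ}
    (h : Tendsto (fun N : ℕ => a N / N) atTop (𝓝 l)) (hlr : l < r) :
    ∀ᶠ N : ℕ in atTop, a N ≤ r * N := by
  filter_upwards [h.eventually (eventually_lt_nhds hlr), eventually_gt_atTop 0] with N hN hpos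
  exact ((div_lt_iff₀ (Nat.cast_pos.2 hpos)).1 hN).le

noncomputable def leftRiemannSum (f : ℝ → ℝ) (σ : ℕ → ℝ) (n : ℕ) : ℝ :=
  ∑ j ∈ Finset.Icc 1 n, f (σ (j - 1)) * (σ j - σ (j - 1))

theorem leftRiemannSum_succ (f : ℝ → ℝ) (σ : ℕ → ℝ) (n : ℕ) :
    leftRiemannSum f σ (n + 1) = leftRiemannSum f σ n + f (σ n) * (σ (n + 1) - σ n) := by
  rw [leftRiemannSum, Finset.sum_Icc_succ_top n.succ_pos, Nat.add_sub_cancel, leftRiemannSum]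

theorem abs_mul_sub_integral_le {f : ℝ → ℝ} {a b ε : ℝ} (hab : a ≤ b)
    (hf : IntervalIntegrable f volume a b) (hε : ∀ x ∈ Icc a b, |f a - f x| ≤ ε) :
    |f a * (b - a) - ∫ x in a..b, f x| ≤ ε * (b - a) := by
  have hconst : f a * (b - a) = ∫ _ in a..b, f a := by
    rw [intervalIntegral.integral_const, smul_eq_mul, mul_comm]
  rw [hconst, ← intervalIntegral.integral_sub intervalIntegrable_const hf, ← Real.norm_eq_abs]
  refine (intervalIntegral.norm_integral_le_of_norm_le_const (C := ε) fun x hx => ?_).trans_eq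
    ?_
  · rw [uIoc_of_le hab] at hx
    exact hε x (Ioc_subset_Icc_self hx)
  · rw [abs_of_nonneg (sub_nonneg.2 hab)]

theorem abs_leftRiemannSum_sub_integral_le {f : ℝ → ℝ} {σ : ℕ → ℝ} {ε δ : ℝ}
    (hσ : Monotone σ) (n : ℕ) (hf : ContinuousOn f (Icc (σ 0) (σ n)))
    (hmesh : ∀ j ∈ Finset.Icc 1 n, σ j - σ (j - 1) ≤ δ)
    (hε : ∀ x ∈ Icc (σ 0) (σ n), ∀ y ∈ Icc (σ 0) (σ n), |x - y| ≤ δ → |f x - f y| ≤ ε) :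
    |leftRiemannSum f σ n - ∫ x in σ 0..σ n, f x| ≤ ε * (σ n - σ 0) := by
  induction n with
  | zero => simp [leftRiemannSum]
  | succ k ih =>
    have hk : σ k ≤ σ (k + 1) := hσ k.le_succ
    have hsub : Icc (σ 0) (σ k) ⊆ Icc (σ 0) (σ (k + 1)) := Icc_subset_Icc_right hk
    have hcell : Icc (σ k) (σ (k + 1)) ⊆ Icc (σ 0) (σ (k + 1)) :=
      Icc_subset_Icc_left (hσ k.zero_le)
    have hinit := ih (hf.mono hsub)
      (fun j hj => hmesh j (Finset.Icc_subset_Icc_right k.le_succ hj))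
      (fun x hx y hy => hε x (hsub hx) y (hsub hy))
    have hint : IntervalIntegrable f volume (σ 0) (σ k) :=
      (hf.mono hsub).intervalIntegrable_of_Icc (hσ k.zero_le)
    have hint' : IntervalIntegrable f volume (σ k) (σ (k + 1)) :=
      (hf.mono hcell).intervalIntegrable_of_Icc hk
    have hlast := abs_mul_sub_integral_le hk hint' fun x hx => by
      refine hε _ (hcell (left_mem_Icc.2 hk)) x (hcell hx) ?_
      rw [abs_sub_comm, abs_of_nonneg (sub_nonneg.2 hx.1)]
      have hlast_mesh := hmesh (k + 1) (Finset.mem_Icc.2 ⟨k.succ_pos, le_rfl⟩)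
      rw [Nat.add_sub_cancel] at hlast_mesh
      linarith [hx.2]
    rw [leftRiemannSum_succ, ← intervalIntegral.integral_add_adjacent_intervals hint hint']
    calc _ = |(leftRiemannSum f σ k - ∫ x in σ 0..σ k, f x) +
          (f (σ k) * (σ (k + 1) - σ k) - ∫ x in σ k..σ (k + 1), f x)| := by ring_nf
      _ ≤ ε * (σ k - σ 0) + ε * (σ (k + 1) - σ k) :=
          (abs_add_le _ _).trans (add_le_add hinit hlast)
      _ = ε * (σ (k + 1) - σ 0) := by ring

theorem tendsto_leftRiemannSum_sub_integral {f : ℝ → ℝ} {a b : ℝ} (hf : ContinuousOn f (Icc a b))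
    {σ : ℕ → ℕ → ℝ} {n : ℕ → ℕ} {δ : ℕ → ℝ} (hσ : ∀ N, Monotone (σ N))
    (h0 : ∀ N, σ N 0 = a) (hle : ∀ N, σ N (n N) ≤ b)
    (hmesh : ∀ᶠ N in atTop, ∀ j ∈ Finset.Icc 1 (n N), σ N j - σ N (j - 1) ≤ δ N)
    (hδ : Tendsto δ atTop (𝓝 0)) :
    Tendsto (fun N => leftRiemannSum f (σ N) (n N) - ∫ x in a..σ N (n N), f x) atTop (𝓝 0) := by
  have hsub : ∀ N, Icc (σ N 0) (σ N (n N)) ⊆ Icc a b :=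
    fun N => h0 N ▸ Icc_subset_Icc_right (hle N)
  rw [Metric.tendsto_nhds]
  intro ε hε
  set η := ε / (b - a + 1)
  have hab : a ≤ b := h0 0 ▸ (hσ 0 (n 0).zero_le).trans (hle 0)
  have hη : 0 < η := div_pos hε (by linarith)
  obtain ⟨δ₀, hδ₀, hunif⟩ := Metric.uniformContinuousOn_iff_le.1
    (isCompact_Icc.uniformContinuousOn_of_continuous hf) η hη
  filter_upwards [hmesh, hδ.eventually (eventually_le_nhds hδ₀)] with N hmeshN hδN
  have hest := abs_leftRiemannSum_sub_integral_le (hσ N) (n N) (hf.mono (hsub N))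
    (fun j hj => (hmeshN j hj).trans hδN)
    (fun x hx y hy hxy => hunif x (hsub N hx) y (hsub N hy) hxy)
  rw [h0 N] at hest
  rw [Real.dist_eq, sub_zero]
  calc _ ≤ η * (σ N (n N) - a) := hest
    _ ≤ η * (b - a) := by gcongr; exact hle N
    _ < η * (b - a + 1) := by linarith
    _ = ε := div_mul_cancel₀ ε (by linarith)

theorem tendsto_leftRiemannSum {f : ℝ → ℝ} {a b : ℝ} (hf : ContinuousOn f (Icc a b))
    {σ : ℕ → ℕ → ℝ} {n : ℕ → ℕ} {δ : ℕ → ℝ} (hσ : ∀ N, Monotone (σ N))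
    (h0 : ∀ N, σ N 0 = a) (hle : ∀ N, σ N (n N) ≤ b)
    (hend : Tendsto (fun N => σ N (n N)) atTop (𝓝 b))
    (hmesh : ∀ᶠ N in atTop, ∀ j ∈ Finset.Icc 1 (n N), σ N j - σ N (j - 1) ≤ δ N)
    (hδ : Tendsto δ atTop (𝓝 0)) :
    Tendsto (fun N => leftRiemannSum f (σ N) (n N)) atTop (𝓝 (∫ x in a..b, f x)) := by
  have hge : ∀ N, a ≤ σ N (n N) := fun N => h0 N ▸ hσ N (n N).zero_le
  have hab : a ≤ b := (hge 0).trans (hle 0)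
  have hprimitive : ContinuousOn (fun y => ∫ x in a..y, f x) (Icc a b) := by
    simpa only [uIcc_of_le hab] using intervalIntegral.continuousOn_primitive_interval'
      (hf.intervalIntegrable_of_Icc (μ := volume) hab) left_mem_uIcc
  have hintegral : Tendsto (fun N => ∫ x in a..σ N (n N), f x) atTop (𝓝 (∫ x in a..b, f x)) :=
    (hprimitive b (right_mem_Icc.2 hab)).tendsto.comp
      (tendsto_nhdsWithin_iff.2 ⟨hend, .of_forall fun N => ⟨hge N, hle N⟩⟩)
  simpa using (tendsto_leftRiemannSum_sub_integral hf hσ h0 hle hmesh hδ).add hintegral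

theorem numerator_tendsto_general {Ω : Type} [MeasurableSpace Ω] (μ : Measure Ω)
    (t : ℕ → ℕ → Ω → ℝ) (hnn : ∀ N j ω, 0 ≤ t N j ω)
    (τ : ℕ → ℕ → Ω → ℝ) (hτ : ∀ N i ω, τ N i ω = ∑ j ∈ Finset.Icc 1 i, t N j ω)
    (N1 : ℕ → Ω → ℕ)
    (hN1 : ∀ N ω, N1 N ω = Set.ncard {j : ℕ | 1 ≤ j ∧ τ N j ω ≤ 1})
    (W : Ω → ℝ → ℝ)
    (hW : ∀ᵐ ω ∂μ, ContinuousOn (W ω) (Set.Ici 0))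
    (h2 : ∀ᵐ ω ∂μ, Tendsto (fun N : ℕ => (N1 N ω : ℝ) / N) atTop (nhds 1))
    (h3 : ∀ᵐ ω ∂μ, Tendsto (fun N : ℕ => τ N (N1 N ω) ω) atTop (nhds 1))
    (h4 : ∀ᵐ ω ∂μ, Tendsto (fun N : ℕ => ⨆ j ∈ Finset.Icc 1 (2 * N), t N j ω)
      atTop (nhds 0)) :
    ∀ᵐ ω ∂μ, Tendsto (fun N : ℕ =>
        ∑ j ∈ Finset.Icc 1 (N1 N ω), τ N j ω * (W ω (τ N j ω) - W ω (τ N (j - 1) ω)))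
      atTop (nhds (∫ s in (0 : ℝ)..1, (W ω 1 - W ω s))) := by
  filter_upwards [hW, h2, h3, h4] with ω hWω hratio hend hmax
  have h0 : ∀ N, τ N 0 ω = 0 := fun N => by simp [hτ]
  have hmono : ∀ N, Monotone (τ N · ω) := fun N => by
    simpa only [hτ] using monotone_sum_Icc_one (hnn N · ω)
  have hle : ∀ N, τ N (N1 N ω) ω ≤ 1 := fun N =>
    hN1 N ω ▸ (hmono N).apply_ncard_setOf_le (h0 N ▸ zero_le_one)
  have hmesh : ∀ᶠ N in atTop, ∀ j ∈ Finset.Icc 1 (N1 N ω),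
      τ N j ω - τ N (j - 1) ω ≤ ⨆ j ∈ Finset.Icc 1 (2 * N), t N j ω := by
    filter_upwards [eventually_le_mul_of_tendsto_div hratio one_lt_two] with N hN j hj
    have hN' : N1 N ω ≤ 2 * N := by exact_mod_cast hN
    rw [hτ, hτ, sum_Icc_one_sub_sum_Icc_one_pred _ (Finset.mem_Icc.1 hj).1]
    exact Finset.le_biSup_of_mem _ (t N · ω) (Finset.Icc_subset_Icc_right hN' hj)
  have hWc : ContinuousOn (W ω) (Icc 0 1) := hWω.mono Icc_subset_Ici_self
  have hriemann := tendsto_leftRiemannSum hWc hmono h0 hle hend hmesh hmax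
  have hboundary : Tendsto (fun N => τ N (N1 N ω) ω * W ω (τ N (N1 N ω) ω)) atTop
      (𝓝 (1 * W ω 1)) :=
    hend.mul ((hWω 1 (mem_Ici.2 zero_le_one)).tendsto.comp
      (tendsto_nhdsWithin_iff.2 ⟨hend, .of_forall fun N => h0 N ▸ hmono N (N1 N ω).zero_le⟩))
  rw [intervalIntegral.integral_sub intervalIntegrable_const
    (hWc.intervalIntegrable_of_Icc zero_le_one), intervalIntegral.integral_const, sub_zero,
    one_smul, ← one_mul (W ω 1)]
  refine (hboundary.sub hriemann).congr fun N => ?_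
  rw [sum_Icc_by_parts (τ N · ω) (fun j => W ω (τ N j ω)), h0 N, leftRiemannSum]
  ring

/-- Numerator convergence: with `τ_j = ∑_{i=1}^j t_i`, `τ_0 = 0`,
`N(1) = #{j ≥ 1 : τ_j ≤ 1}`, if `W` is a.s. continuous on `[0,∞)`,
`τ_{N(1)} → 1` a.s., `N(1)/N → 1` a.s. and `max_{1 ≤ j ≤ 2N} t_j → 0` a.s., then
`∑_{j=1}^{N(1)} τ_j (W_{τ_j} − W_{τ_{j−1}}) → ∫_0^1 (W_1 − W_t) dt` a.s. -/
theorem numerator_tendsto {Ω : Type} [MeasurableSpace Ω] (μ : Measure Ω)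
    [IsProbabilityMeasure μ] (t : ℕ → ℕ → Ω → ℝ) (hnn : ∀ N j ω, 0 ≤ t N j ω)
    (τ : ℕ → ℕ → Ω → ℝ) (hτ : ∀ N i ω, τ N i ω = ∑ j ∈ Finset.Icc 1 i, t N j ω)
    (N1 : ℕ → Ω → ℕ)
    (hN1 : ∀ N ω, N1 N ω = Set.ncard {j : ℕ | 1 ≤ j ∧ τ N j ω ≤ 1})
    (W : Ω → ℝ → ℝ)
    (hW : ∀ᵐ ω ∂μ, ContinuousOn (W ω) (Set.Ici 0))
    (h2 : ∀ᵐ ω ∂μ, Tendsto (fun N : ℕ => (N1 N ω : ℝ) / N) atTop (nhds 1))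
    (h3 : ∀ᵐ ω ∂μ, Tendsto (fun N : ℕ => τ N (N1 N ω) ω) atTop (nhds 1))
    (h4 : ∀ᵐ ω ∂μ, Tendsto (fun N : ℕ => ⨆ j ∈ Finset.Icc 1 (2 * N), t N j ω)
      atTop (nhds 0)) :
    ∀ᵐ ω ∂μ, Tendsto (fun N : ℕ =>
        ∑ j ∈ Finset.Icc 1 (N1 N ω), τ N j ω * (W ω (τ N j ω) - W ω (τ N (j - 1) ω)))
      atTop (nhds (∫ s in (0 : ℝ)..1, (W ω 1 - W ω s))) :=
  numerator_tendsto_general μ t hnn τ hτ N1 hN1 W hW h2 h3 h4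
end
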